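/- Let F(x) = 4x(1−x) be the logistic map with parameter r = 4. Let p₀ ∈ L¹[0,1] be a probability density (p₀ ≥ 0 and ∫₀¹ p₀ = 1), and let μ₀ be the measure on ℝ with density p₀ (supported in [0,1]) with respect to Lebesgue measure. Then for every measurable set A ⊆ [0,1], the pushforward measures μ_n = (F^n)_*μ₀ satisfy lim_{n→∞} μ_n(A) = ∫_A q(x) dx, where q(x) = 1/(π·√(x(1−x))) for 0 < x < 1. -/

import Mathlib

open MeasureTheory Filter Topology

/-- The logistic map with parameter `r = 4`. -/
noncomputable def logisticMap (x : ℝ) : ℝ := 4 * x * (1 - x)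

/-- The invariant density of the logistic map with `r = 4`. -/
noncomputable def logisticDensity (x : ℝ) : ℝ :=
  if 0 < x ∧ x < 1 then 1 / (Real.pi * Real.sqrt (x * (1 - x))) else 0

/-!
The substitution `x = sin² (π θ)` conjugates the logistic map to the doubling map
`T θ = 2 θ mod 1` and carries Lebesgue measure on `[0, 1)` to the arcsine law `q dx`.
Pulling `μ₀` back along it (on `[0, 1/2]`, where the substitution is injective) gives an integrable
density `ρ`, and `μₙ(A) = ∫_{T⁻ⁿ B} ρ` for `B = [0, 1) ∩ {θ | sin² (π θ) ∈ A}`, while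
`∫_A q = |B|`. The doubling map is mixing, `∫_{T⁻ⁿ B} ρ → |B| ∫ ρ`: on each interval
`[k / 2ⁿ, (k + 1) / 2ⁿ)` the set `T⁻ⁿ B` is an affine copy of `B` scaled by `2⁻ⁿ`, which gives the
limit for continuous `ρ`, and continuous functions are dense in `L¹`.
-/

open Real Set Function
open scoped ENNReal

noncomputable def sinSqPi (θ : ℝ) : ℝ := sin (π * θ) ^ 2

lemma sinSqPi_periodic : Periodic sinSqPi 1 := fun θ => by
  rw [sinSqPi, mul_add, mul_one, sin_add_pi, neg_sq, sinSqPi]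

lemma sinSqPi_fract (θ : ℝ) : sinSqPi (Int.fract θ) = sinSqPi θ := by
  rw [← Int.self_sub_floor, ← mul_one (⌊θ⌋ : ℝ), sinSqPi_periodic.sub_int_mul_eq]

lemma sinSqPi_one_sub (θ : ℝ) : sinSqPi (1 - θ) = sinSqPi θ := by
  rw [sinSqPi, mul_one_sub, sin_pi_sub, sinSqPi]

lemma continuous_sinSqPi : Continuous sinSqPi := by unfold sinSqPi; fun_prop

lemma sinSqPi_mem_Icc (θ : ℝ) : sinSqPi θ ∈ Icc 0 1 :=
  ⟨sq_nonneg _, sin_sq_le_one _⟩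

lemma logisticMap_sinSqPi (θ : ℝ) : logisticMap (sinSqPi θ) = sinSqPi (2 * θ) := by
  rw [logisticMap, sinSqPi, sinSqPi, mul_left_comm, sin_two_mul, ← cos_sq']
  ring

lemma iterate_logisticMap_sinSqPi (n : ℕ) (θ : ℝ) :
    logisticMap^[n] (sinSqPi θ) = sinSqPi (2 ^ n * θ) := by
  induction n generalizing θ with
  | zero => simp
  | succ n ih => rw [iterate_succ_apply, logisticMap_sinSqPi, ih, pow_succ, mul_assoc]

lemma hasDerivAt_sinSqPi (θ : ℝ) : HasDerivAt sinSqPi (π * sin (2 * π * θ)) θ := by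
  have h := (hasDerivAt_pow 2 (sin (π * θ))).comp θ ((hasDerivAt_id θ).const_mul π).sin
  refine (h : HasDerivAt sinSqPi _ θ).congr_deriv ?_
  simp only [id, mul_assoc, sin_two_mul]
  norm_num
  ring

lemma sin_two_pi_mul_nonneg {θ : ℝ} (hθ : θ ∈ Icc 0 (1 / 2)) : 0 ≤ sin (2 * π * θ) :=
  sin_nonneg_of_nonneg_of_le_pi (by nlinarith [hθ.1, pi_pos]) (by nlinarith [hθ.2, pi_pos])

lemma strictMonoOn_sinSqPi : StrictMonoOn sinSqPi (Icc 0 (1 / 2)) := by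
  intro a ha b hb hab
  have hmem : ∀ c ∈ Icc (0 : ℝ) (1 / 2), π * c ∈ Icc (-(π / 2)) (π / 2) := fun c hc =>
    ⟨by nlinarith [hc.1, pi_pos], by nlinarith [hc.2, pi_pos]⟩
  have hsin := strictMonoOn_sin (hmem a ha) (hmem b hb) (by nlinarith [pi_pos])
  have h0 : 0 ≤ sin (π * a) := sin_nonneg_of_nonneg_of_le_pi (by nlinarith [ha.1, pi_pos])
    (by nlinarith [ha.2, pi_pos])
  exact pow_lt_pow_left₀ hsin h0 two_ne_zero

lemma sinSqPi_image_Icc : sinSqPi '' Icc 0 (1 / 2) = Icc 0 1 := by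
  refine ((image_subset_range _ _).trans (range_subset_iff.2 sinSqPi_mem_Icc)).antisymm ?_
  have h := intermediate_value_Icc (by norm_num : (0 : ℝ) ≤ 1 / 2) continuous_sinSqPi.continuousOn
  rwa [sinSqPi, sinSqPi, mul_zero, sin_zero, mul_one_div, sin_pi_div_two, zero_pow two_ne_zero,
    one_pow] at h

section ChangeOfVariables

variable {E : Type*} [NormedAddCommGroup E] [NormedSpace ℝ E]

lemma setIntegral_sinSqPi_preimage (g : ℝ → E) {W : Set ℝ} (hW : MeasurableSet W) :
    ∫ θ in Icc 0 (1 / 2) ∩ sinSqPi ⁻¹' W, (π * sin (2 * π * θ)) • g (sinSqPi θ) =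
      ∫ x in Icc 0 1 ∩ W, g x := by
  have hs : MeasurableSet (Icc (0 : ℝ) (1 / 2) ∩ sinSqPi ⁻¹' W) :=
    measurableSet_Icc.inter (continuous_sinSqPi.measurable hW)
  rw [← sinSqPi_image_Icc, ← image_inter_preimage, integral_image_eq_integral_abs_deriv_smul hs
    (fun θ _ => (hasDerivAt_sinSqPi θ).hasDerivWithinAt)
    (strictMonoOn_sinSqPi.injOn.mono inter_subset_left)]
  refine setIntegral_congr_fun hs fun θ hθ => ?_
  rw [abs_of_nonneg (mul_nonneg pi_pos.le (sin_two_pi_mul_nonneg hθ.1))]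

lemma MeasureTheory.IntegrableOn.comp_sinSqPi {g : ℝ → E} (hg : IntegrableOn g (Icc 0 1)) :
    IntegrableOn (fun θ => (π * sin (2 * π * θ)) • g (sinSqPi θ)) (Icc 0 (1 / 2)) := by
  rw [← sinSqPi_image_Icc, integrableOn_image_iff_integrableOn_abs_deriv_smul measurableSet_Icc
    (fun θ _ => (hasDerivAt_sinSqPi θ).hasDerivWithinAt) strictMonoOn_sinSqPi.injOn] at hg
  refine hg.congr_fun (fun θ hθ => ?_) measurableSet_Icc
  dsimp only
  rw [abs_of_nonneg (mul_nonneg pi_pos.le (sin_two_pi_mul_nonneg hθ))]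

end ChangeOfVariables

lemma mul_logisticDensity_sinSqPi {θ : ℝ} (hθ : θ ∈ Ioo 0 (1 / 2)) :
    π * sin (2 * π * θ) * logisticDensity (sinSqPi θ) = 2 := by
  have hu : 0 < sin (π * θ) :=
    sin_pos_of_pos_of_lt_pi (by nlinarith [hθ.1, pi_pos]) (by nlinarith [hθ.2, pi_pos])
  have hv : 0 < cos (π * θ) :=
    cos_pos_of_mem_Ioo ⟨by nlinarith [hθ.1, pi_pos], by nlinarith [hθ.2, pi_pos]⟩
  have hsq := sin_sq_add_cos_sq (π * θ)
  have hsqrt : √(sinSqPi θ * (1 - sinSqPi θ)) = sin (π * θ) * cos (π * θ) := by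
    rw [sinSqPi, ← sqrt_sq (by positivity : 0 ≤ sin (π * θ) * cos (π * θ))]
    congr 1
    linear_combination -(sin (π * θ)) ^ 2 * hsq
  rw [logisticDensity, if_pos ⟨by unfold sinSqPi; positivity, by unfold sinSqPi; nlinarith⟩,
    hsqrt, mul_assoc 2, sin_two_mul]
  field_simp

lemma volume_Ico_zero_one_inter_eq_two_mul {X : Set ℝ} (hX : MeasurableSet X)
    (hsymm : ∀ θ, 1 - θ ∈ X ↔ θ ∈ X) :
    volume (Ico 0 1 ∩ X) = 2 * volume (Icc 0 (1 / 2) ∩ X) := by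
  have hreflect : (fun θ : ℝ => 1 - θ) ⁻¹' (Ico (1 / 2) 1 ∩ X) = Ioc 0 (1 / 2) ∩ X := by
    ext θ
    simp only [mem_preimage, mem_inter_iff, mem_Ico, mem_Ioc, hsymm]
    constructor <;> rintro ⟨⟨h1, h2⟩, hx⟩ <;> exact ⟨⟨by linarith, by linarith⟩, hx⟩
  have hupper : volume (Ico (1 / 2) 1 ∩ X) = volume (Ioc 0 (1 / 2) ∩ X) := by
    rw [← hreflect, (volume.measurePreserving_sub_left 1).measure_preimage
      (measurableSet_Ico.inter hX).nullMeasurableSet]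
  rw [← Ico_union_Ico_eq_Ico (by norm_num : (0 : ℝ) ≤ 1 / 2) (by norm_num : (1 / 2 : ℝ) ≤ 1),
    union_inter_distrib_right, measure_union (Ico_disjoint_Ico_same.mono inter_subset_left
      inter_subset_left) (measurableSet_Ico.inter hX), hupper,
    measure_congr (Ico_ae_eq_Icc.inter (EventuallyEq.refl _ X)),
    measure_congr (Ioc_ae_eq_Icc.inter (EventuallyEq.refl _ X)), two_mul]

lemma integral_logisticDensity {A : Set ℝ} (hA : MeasurableSet A) (hAsub : A ⊆ Icc 0 1) :
    ∫ x in A, logisticDensity x = volume.real (Ico 0 1 ∩ sinSqPi ⁻¹' A) := by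
  have hpre : MeasurableSet (sinSqPi ⁻¹' A) := continuous_sinSqPi.measurable hA
  have hae : (Ioo 0 (1 / 2) ∩ sinSqPi ⁻¹' A : Set ℝ) =ᵐ[volume]
      (Icc 0 (1 / 2) ∩ sinSqPi ⁻¹' A : Set ℝ) :=
    Ioo_ae_eq_Icc.inter (EventuallyEq.refl _ _)
  calc ∫ x in A, logisticDensity x = ∫ x in Icc 0 1 ∩ A, logisticDensity x := by
        rw [inter_eq_right.2 hAsub]
    _ = ∫ θ in Icc 0 (1 / 2) ∩ sinSqPi ⁻¹' A, π * sin (2 * π * θ) * logisticDensity (sinSqPi θ) :=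
        (setIntegral_sinSqPi_preimage _ hA).symm
    _ = ∫ θ in Ioo 0 (1 / 2) ∩ sinSqPi ⁻¹' A, (2 : ℝ) := by
        refine (setIntegral_congr_set hae.symm).trans ?_
        exact setIntegral_congr_fun (measurableSet_Ioo.inter hpre)
          fun θ hθ => mul_logisticDensity_sinSqPi hθ.1
    _ = volume.real (Ico 0 1 ∩ sinSqPi ⁻¹' A) := by
        rw [setIntegral_const, measureReal_def, measureReal_def, measure_congr hae,
          volume_Ico_zero_one_inter_eq_two_mul hpre fun θ => by
            simp only [mem_preimage, sinSqPi_one_sub],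
          ENNReal.toReal_mul, smul_eq_mul, mul_comm]
        norm_num

section Mixing

variable {α E : Type*} [MeasurableSpace α] [NormedAddCommGroup E] [NormedSpace ℝ E]

lemma norm_setIntegral_sub_setIntegral_le {μ : Measure α} {f g : α → E} {s t : Set α}
    (hf : IntegrableOn f s μ) (hg : IntegrableOn g s μ) (hts : t ⊆ s) :
    ‖∫ x in t, f x ∂μ - ∫ x in t, g x ∂μ‖ ≤ ∫ x in s, ‖f x - g x‖ ∂μ := by
  rw [← integral_sub (hf.mono_set hts) (hg.mono_set hts)]
  exact (norm_integral_le_integral_norm _).trans (setIntegral_mono_set (hf.sub hg).norm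
    (Eventually.of_forall fun _ => norm_nonneg _) hts.eventuallyLE)

lemma abs_setIntegral_sub_mul_setIntegral_le {μ : Measure α} {f : α → ℝ} {I J : Set α}
    {c t ε : ℝ} (hJI : J ⊆ I) (hI : μ I < ∞) (hJ : μ.real J = t * μ.real I) (ht : 0 ≤ t)
    (hf : IntegrableOn f I μ) (hfc : ∀ x ∈ I, |f x - c| ≤ ε) :
    |∫ x in J, f x ∂μ - t * ∫ x in I, f x ∂μ| ≤ 2 * t * ε * μ.real I := by
  have hc : IntegrableOn (fun _ => c) I μ := integrableOn_const hI.ne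
  have hJ' : μ J < ∞ := (measure_mono hJI).trans_lt hI
  have hcentre : ∫ x in J, f x ∂μ - t * ∫ x in I, f x ∂μ =
      ∫ x in J, (f x - c) ∂μ - t * ∫ x in I, (f x - c) ∂μ := by
    rw [integral_sub (hf.mono_set hJI) (hc.mono_set hJI), integral_sub hf hc, setIntegral_const,
      setIntegral_const, hJ, smul_eq_mul, smul_eq_mul]
    ring
  have hJbound : ‖∫ x in J, (f x - c) ∂μ‖ ≤ ε * μ.real J :=
    norm_setIntegral_le_of_norm_le_const hJ' fun x hx => hfc x (hJI hx)
  have hIbound : ‖∫ x in I, (f x - c) ∂μ‖ ≤ ε * μ.real I :=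
    norm_setIntegral_le_of_norm_le_const hI hfc
  rw [Real.norm_eq_abs] at hJbound hIbound
  rw [hcentre]
  calc _ ≤ |∫ x in J, (f x - c) ∂μ| + t * |∫ x in I, (f x - c) ∂μ| :=
        (abs_sub _ _).trans_eq (by rw [abs_mul, abs_of_nonneg ht])
    _ ≤ ε * μ.real J + t * (ε * μ.real I) := by gcongr
    _ = 2 * t * ε * μ.real I := by rw [hJ]; ring

lemma volume_preimage_mul_sub {a : ℝ} (ha : a ≠ 0) (b : ℝ) (B : Set ℝ) :
    volume ((fun x => a * x - b) ⁻¹' B) = ENNReal.ofReal |a⁻¹| * volume B := by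
  have : (fun x => a * x - b) ⁻¹' B = (a * ·) ⁻¹' ((· + -b) ⁻¹' B) := by
    ext x
    simp [sub_eq_add_neg]
  rw [this, Real.volume_preimage_mul_left ha, measure_preimage_add_right]

def gridIco (N k : ℕ) : Set ℝ := Ico ((k : ℝ) / N) ((k + 1) / N)

variable {N : ℕ}

lemma mem_gridIco_iff (hN : 0 < N) {k : ℕ} {θ : ℝ} : θ ∈ gridIco N k ↔ ⌊(N : ℝ) * θ⌋ = k := by
  have hN' : (0 : ℝ) < N := Nat.cast_pos.2 hN
  rw [gridIco, mem_Ico, div_le_iff₀ hN', lt_div_iff₀ hN', Int.floor_eq_iff, mul_comm θ]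
  push_cast
  rfl

lemma pairwise_disjoint_gridIco (hN : 0 < N) : Pairwise (Disjoint on gridIco N) :=
  fun k l hkl => disjoint_left.2 fun θ hk hl =>
    hkl (by exact_mod_cast ((mem_gridIco_iff hN).1 hk).symm.trans ((mem_gridIco_iff hN).1 hl))

lemma Ico_zero_one_eq_biUnion_gridIco (hN : 0 < N) :
    Ico (0 : ℝ) 1 = ⋃ k ∈ Finset.range N, gridIco N k := by
  have hN' : (0 : ℝ) < N := Nat.cast_pos.2 hN
  ext θ
  simp only [mem_iUnion, Finset.mem_range, exists_prop, mem_gridIco_iff hN, mem_Ico]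
  constructor
  · rintro ⟨h0, h1⟩
    obtain ⟨k, hk⟩ :=
      Int.eq_ofNat_of_zero_le (Int.floor_nonneg (a := (N : ℝ) * θ) |>.2 (by positivity))
    refine ⟨k, ?_, hk⟩
    have : ⌊(N : ℝ) * θ⌋ < N := Int.floor_lt.2 (by push_cast; nlinarith)
    omega
  · rintro ⟨k, hk, hθ⟩
    have hfloor := Int.floor_eq_iff.1 hθ
    have hk' : (k : ℝ) + 1 ≤ N := by exact_mod_cast hk
    push_cast at hfloor
    constructor <;> nlinarith [hfloor.1, hfloor.2, (Nat.cast_nonneg k : (0 : ℝ) ≤ k)]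

lemma gridIco_subset_Ico (hN : 0 < N) {k : ℕ} (hk : k < N) : gridIco N k ⊆ Ico 0 1 := by
  rw [Ico_zero_one_eq_biUnion_gridIco hN]
  exact subset_biUnion_of_mem (u := gridIco N) (Finset.mem_range.2 hk)

lemma volume_gridIco (k : ℕ) : volume (gridIco N k) = ENNReal.ofReal (1 / N) := by
  rw [gridIco, Real.volume_Ico]
  ring_nf

lemma gridIco_inter_fract_mul_preimage (hN : 0 < N) {B : Set ℝ} (hB : B ⊆ Ico 0 1) (k : ℕ) :
    gridIco N k ∩ (fun θ => Int.fract ((N : ℝ) * θ)) ⁻¹' B = (fun θ => (N : ℝ) * θ - k) ⁻¹' B := by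
  ext θ
  simp only [mem_inter_iff, mem_preimage, mem_gridIco_iff hN, Int.fract]
  constructor
  · rintro ⟨hk, hθ⟩
    rwa [hk] at hθ
  · intro hθ
    have hB' := hB hθ
    have hk : ⌊(N : ℝ) * θ⌋ = k := by
      rw [Int.floor_eq_iff]
      push_cast
      constructor <;> linarith [hB'.1, hB'.2]
    rw [hk]
    exact ⟨rfl, hθ⟩

lemma setIntegral_Ico_zero_one_inter_eq_sum (hN : 0 < N) {f : ℝ → ℝ} (hf : IntegrableOn f (Ico 0 1))
    {S : Set ℝ} (hS : MeasurableSet S) :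
    ∫ θ in Ico 0 1 ∩ S, f θ = ∑ k ∈ Finset.range N, ∫ θ in gridIco N k ∩ S, f θ := by
  rw [Ico_zero_one_eq_biUnion_gridIco hN, iUnion₂_inter]
  exact integral_biUnion_finset _ (fun k _ => measurableSet_Ico.inter hS)
    (fun k _ l _ hkl => ((pairwise_disjoint_gridIco hN) hkl).mono inter_subset_left
      inter_subset_left)
    (fun k hk => hf.mono_set (inter_subset_left.trans
      (gridIco_subset_Ico hN (Finset.mem_range.1 hk))))

lemma eventually_forall_gridIco_abs_sub_le {φ : ℝ → ℝ} (hφ : ContinuousOn φ (Icc 0 1)) {ε : ℝ}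
    (hε : 0 < ε) :
    ∀ᶠ N : ℕ in atTop, ∀ k < N, ∀ θ ∈ gridIco N k, |φ θ - φ (k / N)| ≤ ε := by
  obtain ⟨δ, hδ, hφδ⟩ :=
    Metric.uniformContinuousOn_iff.1 (isCompact_Icc.uniformContinuousOn_of_continuous hφ) ε hε
  obtain ⟨N₀, hN₀⟩ := exists_nat_one_div_lt hδ
  filter_upwards [eventually_gt_atTop N₀] with N hN k hk θ hθ
  have hN' : (N₀ : ℝ) + 1 ≤ N := by exact_mod_cast hN
  have hpos : (0 : ℝ) < N := by linarith [(Nat.cast_nonneg N₀ : (0 : ℝ) ≤ N₀)]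
  have hk' : (k : ℝ) + 1 ≤ N := by exact_mod_cast hk
  have hleft : (k : ℝ) / N ≤ θ := hθ.1
  have hright : θ < (k + 1) / N := hθ.2
  have hkN : (k : ℝ) / N ∈ Icc 0 1 := ⟨by positivity, by rw [div_le_one hpos]; linarith⟩
  have hθmem : θ ∈ Icc 0 1 :=
    ⟨hkN.1.trans hleft, hright.le.trans (by rw [div_le_one hpos]; linarith)⟩
  have hdist : dist θ (k / N) < δ := by
    rw [Real.dist_eq, abs_of_nonneg (by linarith)]
    calc θ - k / N < (k + 1) / N - k / N := by linarith
      _ = 1 / N := by ring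
      _ ≤ 1 / (N₀ + 1) := one_div_le_one_div_of_le (by positivity) hN'
      _ < δ := hN₀
  exact (hφδ θ hθmem _ hkN hdist).le

lemma volume_real_gridIco_inter_fract_mul_preimage (hN : 0 < N) {B : Set ℝ} (hB : B ⊆ Ico 0 1)
    (k : ℕ) :
    volume.real (gridIco N k ∩ (fun θ => Int.fract ((N : ℝ) * θ)) ⁻¹' B) =
      volume.real B * volume.real (gridIco N k) := by
  have hN' : (0 : ℝ) < N := Nat.cast_pos.2 hN
  rw [gridIco_inter_fract_mul_preimage hN hB, measureReal_def, measureReal_def, measureReal_def,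
    volume_preimage_mul_sub hN'.ne', volume_gridIco, ENNReal.toReal_mul, abs_inv,
    abs_of_pos hN', one_div, mul_comm]

theorem tendsto_setIntegral_fract_mul_preimage_of_continuousOn {φ : ℝ → ℝ}
    (hφ : ContinuousOn φ (Icc 0 1)) {B : Set ℝ} (hB : MeasurableSet B) (hBs : B ⊆ Ico 0 1) :
    Tendsto (fun N : ℕ => ∫ θ in Ico 0 1 ∩ (fun θ => Int.fract ((N : ℝ) * θ)) ⁻¹' B, φ θ) atTop
      (𝓝 (volume.real B * ∫ θ in Ico 0 1, φ θ)) := by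
  have hφint : IntegrableOn φ (Ico 0 1) := hφ.integrableOn_Icc.mono_set Ico_subset_Icc_self
  have hB1 : volume.real B ≤ 1 := (measureReal_mono hBs measure_Ico_lt_top.ne).trans_eq (by simp)
  rw [Metric.tendsto_nhds]
  intro ε hε
  filter_upwards [eventually_forall_gridIco_abs_sub_le hφ (by positivity : 0 < ε / 4),
    eventually_gt_atTop 0] with N hosc hN
  have hvol : ∀ k, volume.real (gridIco N k) = 1 / N := fun k => by
    rw [measureReal_def, volume_gridIco, ENNReal.toReal_ofReal (by positivity)]
  have hpiece : ∀ k < N,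
      |(∫ θ in gridIco N k ∩ (fun θ => Int.fract ((N : ℝ) * θ)) ⁻¹' B, φ θ) -
        volume.real B * ∫ θ in gridIco N k, φ θ| ≤ 2 * volume.real B * (ε / 4) * (1 / N) :=
    fun k hk => hvol k ▸ abs_setIntegral_sub_mul_setIntegral_le inter_subset_left
      (by rw [volume_gridIco]; exact ENNReal.ofReal_lt_top)
      (volume_real_gridIco_inter_fract_mul_preimage hN hBs k) measureReal_nonneg
      (hφint.mono_set (gridIco_subset_Ico hN hk)) (hosc k hk)
  have hpre : MeasurableSet ((fun θ => Int.fract ((N : ℝ) * θ)) ⁻¹' B) :=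
    (measurable_fract.comp (measurable_const_mul _)) hB
  have hsum : ∫ θ in Ico 0 1, φ θ = ∑ k ∈ Finset.range N, ∫ θ in gridIco N k, φ θ := by
    simpa using setIntegral_Ico_zero_one_inter_eq_sum hN hφint MeasurableSet.univ
  rw [Real.dist_eq, setIntegral_Ico_zero_one_inter_eq_sum hN hφint hpre, hsum, Finset.mul_sum,
    ← Finset.sum_sub_distrib]
  calc _ ≤ ∑ k ∈ Finset.range N, 2 * volume.real B * (ε / 4) * (1 / N) :=
        (Finset.abs_sum_le_sum_abs _ _).trans
          (Finset.sum_le_sum fun k hk => hpiece k (Finset.mem_range.1 hk))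
    _ = 2 * volume.real B * (ε / 4) := by
        rw [Finset.sum_const, Finset.card_range, nsmul_eq_mul]
        field_simp
    _ < ε := by nlinarith [measureReal_nonneg (μ := volume) (s := B)]

theorem tendsto_setIntegral_fract_mul_preimage {ρ : ℝ → ℝ} (hρ : IntegrableOn ρ (Ico 0 1))
    {B : Set ℝ} (hB : MeasurableSet B) (hBs : B ⊆ Ico 0 1) :
    Tendsto (fun N : ℕ => ∫ θ in Ico 0 1 ∩ (fun θ => Int.fract ((N : ℝ) * θ)) ⁻¹' B, ρ θ) atTop
      (𝓝 (volume.real B * ∫ θ in Ico 0 1, ρ θ)) := by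
  have hB1 : volume.real B ≤ 1 := (measureReal_mono hBs measure_Ico_lt_top.ne).trans_eq (by simp)
  rw [Metric.tendsto_nhds]
  intro ε hε
  obtain ⟨φ, hρφ, hφ⟩ := hρ.exists_boundedContinuous_integral_sub_le (by positivity : 0 < ε / 4)
  have hclose : ∀ S ⊆ Ico 0 1, |(∫ θ in S, ρ θ) - ∫ θ in S, φ θ| ≤ ε / 4 := fun S hS =>
    (norm_setIntegral_sub_setIntegral_le hρ hφ hS).trans hρφ
  have hscaled : |volume.real B * (∫ θ in Ico 0 1, φ θ) - volume.real B * ∫ θ in Ico 0 1, ρ θ|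
      ≤ ε / 4 := by
    rw [← mul_sub, abs_mul, abs_of_nonneg measureReal_nonneg, abs_sub_comm]
    exact (mul_le_of_le_one_left (abs_nonneg _) hB1).trans (hclose _ subset_rfl)
  filter_upwards [Metric.tendsto_nhds.1 (tendsto_setIntegral_fract_mul_preimage_of_continuousOn
    φ.continuous.continuousOn hB hBs) (ε / 4) (by positivity)] with N hN
  rw [Real.dist_eq] at hN ⊢
  set S := Ico 0 1 ∩ (fun θ => Int.fract ((N : ℝ) * θ)) ⁻¹' B
  have hS := hclose S inter_subset_left
  linarith [abs_sub_le (∫ θ in S, ρ θ) (∫ θ in S, φ θ) (volume.real B * ∫ θ in Ico 0 1, ρ θ),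
    abs_sub_le (∫ θ in S, φ θ) (volume.real B * ∫ θ in Ico 0 1, φ θ)
      (volume.real B * ∫ θ in Ico 0 1, ρ θ)]

end Mixing

noncomputable def sinSqPiPullback (p : ℝ → ℝ) : ℝ → ℝ :=
  (Icc 0 (1 / 2)).indicator fun θ => π * sin (2 * π * θ) * p (sinSqPi θ)

lemma integrableOn_sinSqPiPullback {p : ℝ → ℝ} (hp : IntegrableOn p (Icc 0 1)) :
    IntegrableOn (sinSqPiPullback p) (Ico 0 1) :=
  (hp.comp_sinSqPi.integrable_indicator measurableSet_Icc).integrableOn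

lemma setIntegral_sinSqPiPullback (p : ℝ → ℝ) {W : Set ℝ} (hW : MeasurableSet W) :
    ∫ θ in Ico 0 1 ∩ sinSqPi ⁻¹' W, sinSqPiPullback p θ = ∫ x in Icc 0 1 ∩ W, p x := by
  rw [sinSqPiPullback, setIntegral_indicator measurableSet_Icc, inter_right_comm,
    inter_eq_right.2 (Icc_subset_Ico_right (by norm_num)), ← setIntegral_sinSqPi_preimage p hW]
  rfl

lemma logisticMap_preimage_Icc_subset : logisticMap ⁻¹' Icc 0 1 ⊆ Icc 0 1 := fun x hx => by
  have h : 0 ≤ 4 * x * (1 - x) := hx.1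
  constructor <;> nlinarith

lemma iterate_logisticMap_preimage_subset {A : Set ℝ} (hA : A ⊆ Icc 0 1) (n : ℕ) :
    logisticMap^[n] ⁻¹' A ⊆ Icc 0 1 := by
  induction n with
  | zero => exact hA
  | succ n ih =>
    rw [iterate_succ, preimage_comp]
    exact (preimage_mono ih).trans logisticMap_preimage_Icc_subset

lemma fract_two_pow_mul_preimage (A : Set ℝ) (n : ℕ) :
    (fun θ => Int.fract (((2 ^ n : ℕ) : ℝ) * θ)) ⁻¹' (Ico 0 1 ∩ sinSqPi ⁻¹' A) =
      sinSqPi ⁻¹' (logisticMap^[n] ⁻¹' A) := by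
  ext θ
  simp [Int.fract_nonneg, Int.fract_lt_one, sinSqPi_fract, iterate_logisticMap_sinSqPi]

lemma map_iterate_logisticMap_withDensity_apply {p : ℝ → ℝ} (hp : ∀ x, 0 ≤ p x)
    (hint : IntegrableOn p (Icc 0 1)) {A : Set ℝ} (hA : MeasurableSet A) (hAsub : A ⊆ Icc 0 1)
    (n : ℕ) :
    ((volume.withDensity fun x => ENNReal.ofReal (p x)).map logisticMap^[n]) A =
      ENNReal.ofReal (∫ θ in Ico 0 1 ∩ (fun θ => Int.fract (((2 ^ n : ℕ) : ℝ) * θ)) ⁻¹'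
        (Ico 0 1 ∩ sinSqPi ⁻¹' A), sinSqPiPullback p θ) := by
  have hF : Measurable logisticMap^[n] := by
    refine Measurable.iterate ?_ n
    unfold logisticMap
    fun_prop
  have hW := iterate_logisticMap_preimage_subset hAsub n
  rw [Measure.map_apply hF hA, withDensity_apply _ (hF hA),
    ← ofReal_integral_eq_lintegral_ofReal (hint.mono_set hW) (ae_of_all _ hp),
    fract_two_pow_mul_preimage, setIntegral_sinSqPiPullback p (hF hA), inter_eq_right.2 hW]

theorem logistic_setwise_convergence
    (p₀ : ℝ → ℝ) (hpos : ∀ x, 0 ≤ p₀ x)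
    (hint : IntegrableOn p₀ (Set.Icc (0 : ℝ) 1))
    (hnorm : ∫ x in Set.Icc (0 : ℝ) 1, p₀ x = 1)
    (A : Set ℝ) (hA : MeasurableSet A) (hAsub : A ⊆ Set.Icc (0 : ℝ) 1) :
    Tendsto
      (fun n : ℕ =>
        ((volume.withDensity (fun x => ENNReal.ofReal (p₀ x))).map (logisticMap^[n])) A)
      atTop (𝓝 (ENNReal.ofReal (∫ x in A, logisticDensity x))) := by
  have hB : MeasurableSet (Ico 0 1 ∩ sinSqPi ⁻¹' A) :=
    measurableSet_Ico.inter (continuous_sinSqPi.measurable hA)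
  have hmass : ∫ θ in Ico 0 1, sinSqPiPullback p₀ θ = 1 := by
    simpa [hnorm] using setIntegral_sinSqPiPullback p₀ MeasurableSet.univ
  have hmix := (tendsto_setIntegral_fract_mul_preimage (integrableOn_sinSqPiPullback hint) hB
    inter_subset_left).comp (tendsto_pow_atTop_atTop_of_one_lt one_lt_two)
  rw [hmass, mul_one, ← integral_logisticDensity hA hAsub] at hmix
  exact (ENNReal.tendsto_ofReal hmix).congr fun n =>
    (map_iterate_logisticMap_withDensity_apply hpos hint hA hAsub n).symm
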